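/- Let G be a finite multigraph with n edges whose κ-isolated vertices have total volume at most εn, with 0 < ε < 1/2 and κ_ε = (1−ε)κ. Consider the process G₀ = G, and at each step i ≥ 1, if G_{i−1} is nonempty and not a κ_ε-expander, choose a κ_ε-bad set S_i of G_{i−1} and set G_i = G_{i−1}\S_i; stop otherwise. Then every vertex removed by this process is κ_ε-isolated in G, i.e. ∪_{1≤i≤τ} S_i ⊆ Isol_{κ_ε}(G) ⊆ Isol_κ(G), where τ is the final step. -/

import Mathlib

open Finset
open scoped Classical

-- `m x y` is the number of oriented edges (darts) from `x` to `y` in a multigraph;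
-- a loop at `x` contributes two darts to `m x x`.

/-- Number of oriented edges from `X` to `Y`. -/
def eG {V : Type*} [DecidableEq V] (m : V → V → ℕ) (X Y : Finset V) : ℕ :=
  ∑ x ∈ X, ∑ y ∈ Y, m x y

/-- Volume of `X` inside the subgraph induced on `A`. -/
def volOn {V : Type*} [DecidableEq V] (m : V → V → ℕ) (A X : Finset V) : ℕ :=
  eG m X A

/-- The subgraph induced on `X` is connected. -/
def ConnOn {V : Type*} [DecidableEq V] (m : V → V → ℕ) (X : Finset V) : Prop :=
  ∀ x ∈ X, ∀ y ∈ X,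
    Relation.ReflTransGen (fun a b => a ∈ X ∧ b ∈ X ∧ 0 < m a b) x y

/-- `X` is a `κ`-bad set of the subgraph induced on `A`. -/
def BadSet {V : Type*} [DecidableEq V] (m : V → V → ℕ) (κ : ℝ) (A X : Finset V) : Prop :=
  X ⊆ A ∧ X.Nonempty ∧ ConnOn m X ∧
    2 * (volOn m A X : ℝ) ≤ (volOn m A A : ℝ) ∧
    (eG m X (A \ X) : ℝ) < κ * (volOn m A X : ℝ)

/-- `X` is a strong `κ`-bad set of the subgraph induced on `A`. -/
def StrongBadSet {V : Type*} [DecidableEq V] (m : V → V → ℕ) (κ : ℝ) (A X : Finset V) : Prop :=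
  BadSet m κ A X ∧ ConnOn m (A \ X)

/-- The set of `κ`-isolated vertices of the whole graph. -/
noncomputable def Isol {V : Type*} [Fintype V] [DecidableEq V] (m : V → V → ℕ) (κ : ℝ) :
    Finset V :=
  univ.filter (fun v => ∃ X, BadSet m κ univ X ∧ v ∈ X)

/-- The set of strongly `κ`-isolated vertices of the whole graph. -/
noncomputable def IsolStrong {V : Type*} [Fintype V] [DecidableEq V] (m : V → V → ℕ) (κ : ℝ) :
    Finset V :=
  univ.filter (fun v => ∃ X, StrongBadSet m κ univ X ∧ v ∈ X)

/-- The subgraph induced on `A` is a `κ`-expander. -/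
def IsExpanderOn {V : Type*} [DecidableEq V] (m : V → V → ℕ) (κ : ℝ) (A : Finset V) : Prop :=
  ∀ X ⊆ A, 2 * (volOn m A X : ℝ) ≤ (volOn m A A : ℝ) →
    κ * (volOn m A X : ℝ) ≤ (eG m X (A \ X) : ℝ)

/-! The removed set `W` keeps the invariant that each of its connected components is a
`(1 - ε)κ`-bad set of `G`. When a bad set `S` of `G \ W` is removed, the only new component is
`S` together with the components of `W` it touches; its cut is at most the sum of the cut of `S`
in `G \ W` and the cuts of those components, hence small. It cannot carry more than half of the
volume: otherwise each component of its complement is either `κ`-isolated or sends a `κ`-fraction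
of its volume into it, and as the touched components are `κ`-isolated too, the budget `εn` on
`Isol_κ(G)` would make that cut too large. -/

section EdgeCount

variable {V : Type*} [DecidableEq V] {m : V → V → ℕ}

theorem eG_comm (hsym : ∀ x y, m x y = m y x) (X Y : Finset V) : eG m X Y = eG m Y X := by
  unfold eG
  rw [sum_comm]
  exact sum_congr rfl fun y _ => sum_congr rfl fun x _ => hsym x y

theorem eG_union_left {X X' : Finset V} (Y : Finset V) (h : Disjoint X X') :
    eG m (X ∪ X') Y = eG m X Y + eG m X' Y :=
  sum_union h

theorem eG_union_right (X : Finset V) {Y Y' : Finset V} (h : Disjoint Y Y') :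
    eG m X (Y ∪ Y') = eG m X Y + eG m X Y' := by
  unfold eG
  rw [← sum_add_distrib]
  exact sum_congr rfl fun x _ => sum_union h

theorem eG_sdiff_add {X X' : Finset V} (h : X ⊆ X') (Y : Finset V) :
    eG m (X' \ X) Y + eG m X Y = eG m X' Y :=
  sum_sdiff h

theorem eG_inter_add_sdiff (X X' Y : Finset V) :
    eG m (X ∩ X') Y + eG m (X \ X') Y = eG m X Y :=
  sum_inter_add_sum_sdiff _ _ _

theorem eG_mono {X X' Y Y' : Finset V} (hX : X ⊆ X') (hY : Y ⊆ Y') : eG m X Y ≤ eG m X' Y' :=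
  (sum_le_sum fun _ _ => sum_le_sum_of_subset hY).trans (sum_le_sum_of_subset hX)

theorem le_eG {X Y : Finset V} {x y : V} (hx : x ∈ X) (hy : y ∈ Y) : m x y ≤ eG m X Y :=
  (single_le_sum (fun _ _ => Nat.zero_le _) hy).trans
    (single_le_sum (f := fun x' => ∑ y' ∈ Y, m x' y') (fun _ _ => Nat.zero_le _) hx)

theorem eG_eq_zero_iff {X Y : Finset V} : eG m X Y = 0 ↔ ∀ x ∈ X, ∀ y ∈ Y, m x y = 0 := by
  simp only [eG, sum_eq_zero_iff]

theorem eG_biUnion {F : Finset (Finset V)} (hF : (F : Set (Finset V)).PairwiseDisjoint id)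
    (Y : Finset V) : eG m (F.biUnion id) Y = ∑ c ∈ F, eG m c Y :=
  sum_biUnion hF

end EdgeCount

section Components

variable {V : Type*} {m : V → V → ℕ} {Y Z : Finset V} {a b v : V}

-- `ConnOn m X` is, definitionally, connectivity of `X` under `AdjIn m X`.
def AdjIn (m : V → V → ℕ) (Y : Finset V) (a b : V) : Prop :=
  a ∈ Y ∧ b ∈ Y ∧ 0 < m a b

noncomputable def component (m : V → V → ℕ) (Y : Finset V) (a : V) : Finset V :=
  Y.filter (Relation.ReflTransGen (AdjIn m Y) a)

noncomputable def components [DecidableEq V] (m : V → V → ℕ) (Y : Finset V) :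
    Finset (Finset V) :=
  Y.image (component m Y)

theorem mem_component :
    b ∈ component m Y a ↔ b ∈ Y ∧ Relation.ReflTransGen (AdjIn m Y) a b :=
  mem_filter

theorem component_subset : component m Y a ⊆ Y :=
  filter_subset _ _

theorem self_mem_component (ha : a ∈ Y) : a ∈ component m Y a :=
  mem_component.2 ⟨ha, .refl⟩

theorem reflTransGen_adjIn_symm (hsym : ∀ x y, m x y = m y x)
    (h : Relation.ReflTransGen (AdjIn m Y) a b) : Relation.ReflTransGen (AdjIn m Y) b a := by
  refine (@Relation.ReflTransGen.stdSymm _ _ ⟨?_⟩).symm _ _ h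
  rintro p q ⟨hp, hq, hpq⟩
  exact ⟨hq, hp, hsym q p ▸ hpq⟩

theorem reflTransGen_adjIn_mono {Y' : Finset V} (hYY' : Y ⊆ Y')
    (h : Relation.ReflTransGen (AdjIn m Y) a b) : Relation.ReflTransGen (AdjIn m Y') a b :=
  Relation.ReflTransGen.mono (fun _ _ ⟨hp, hq, hpq⟩ => ⟨hYY' hp, hYY' hq, hpq⟩) _ _ h

theorem component_eq_of_mem (hsym : ∀ x y, m x y = m y x) (hb : b ∈ component m Y a) :
    component m Y b = component m Y a := by
  have hab := (mem_component.1 hb).2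
  ext c
  simp only [mem_component]
  exact and_congr_right fun _ =>
    ⟨hab.trans, (reflTransGen_adjIn_symm hsym hab).trans⟩

theorem eq_zero_of_mem_component {x y : V} (hx : x ∈ component m Y a) (hy : y ∈ Y)
    (hyc : y ∉ component m Y a) : m x y = 0 := by
  by_contra hne
  obtain ⟨hxY, hax⟩ := mem_component.1 hx
  exact hyc (mem_component.2 ⟨hy, hax.tail ⟨hxY, hy, Nat.pos_of_ne_zero hne⟩⟩)

theorem connOn_component [DecidableEq V] (hsym : ∀ x y, m x y = m y x) :
    ConnOn m (component m Y a) := by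
  have stay : ∀ {x y : V}, Relation.ReflTransGen (AdjIn m Y) x y → x ∈ component m Y a →
      Relation.ReflTransGen (AdjIn m (component m Y a)) x y := by
    intro x y hxy hx
    induction hxy with
    | refl => exact .refl
    | @tail b c hxb hbc ih =>
      have hax := (mem_component.1 hx).2
      have hb : b ∈ component m Y a := mem_component.2 ⟨hbc.1, hax.trans hxb⟩
      have hc : c ∈ component m Y a := mem_component.2 ⟨hbc.2.1, (hax.trans hxb).tail hbc⟩
      exact ih.tail ⟨hb, hc, hbc.2.2⟩
  intro x hx y hy
  exact stay ((reflTransGen_adjIn_symm hsym (mem_component.1 hx).2).trans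
    (mem_component.1 hy).2) hx

theorem component_eq_of_connOn [DecidableEq V] (hv : v ∈ Z) (hZY : Z ⊆ Y) (hconn : ConnOn m Z)
    (hcut : ∀ x ∈ Z, ∀ y ∈ Y \ Z, m x y = 0) : component m Y v = Z := by
  refine Subset.antisymm (fun u hu => ?_) fun z hz =>
    mem_component.2 ⟨hZY hz, reflTransGen_adjIn_mono hZY (hconn v hv z hz)⟩
  obtain ⟨-, hvu⟩ := mem_component.1 hu
  clear hu
  induction hvu with
  | refl => exact hv
  | @tail b c _ hbc hb =>
    by_contra hc
    exact (hcut b hb c (mem_sdiff.2 ⟨hbc.2.1, hc⟩)).not_gt hbc.2.2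

end Components

section Partition

variable {V : Type*} [DecidableEq V] {m : V → V → ℕ}

theorem pairwiseDisjoint_components (hsym : ∀ x y, m x y = m y x) (Y : Finset V) :
    (components m Y : Set (Finset V)).PairwiseDisjoint id := by
  simp only [components, coe_image]
  rintro _ ⟨a, -, rfl⟩ _ ⟨b, -, rfl⟩ hne
  refine disjoint_left.2 fun u hua hub => hne ?_
  rw [← component_eq_of_mem hsym hua, component_eq_of_mem hsym hub]

theorem biUnion_components (Y : Finset V) : (components m Y).biUnion id = Y := by
  ext x
  simp only [components, mem_biUnion, mem_image, id]
  exact ⟨fun ⟨_, ⟨a, _, rfl⟩, hx⟩ => component_subset hx,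
    fun hx => ⟨_, ⟨x, hx, rfl⟩, self_mem_component hx⟩⟩

theorem eG_eq_sum_components (hsym : ∀ x y, m x y = m y x) (Y Z : Finset V) :
    eG m Y Z = ∑ c ∈ components m Y, eG m c Z := by
  conv_lhs => rw [← biUnion_components (m := m) Y]
  exact eG_biUnion (pairwiseDisjoint_components hsym Y) Z

theorem eG_component_compl [Fintype V] (Y : Finset V) (a : V) :
    eG m (component m Y a) (univ \ component m Y a) = eG m (component m Y a) (univ \ Y) := by
  have hsplit : univ \ component m Y a = (univ \ Y) ∪ (Y \ component m Y a) := by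
    ext x
    have := @component_subset _ m Y a
    simp only [mem_sdiff, mem_union, mem_univ, true_and]
    tauto
  rw [hsplit, eG_union_right _ (disjoint_sdiff_self_left.mono_right sdiff_subset),
    eG_eq_zero_iff.2 fun x hx y hy =>
      eq_zero_of_mem_component hx (mem_sdiff.1 hy).1 (mem_sdiff.1 hy).2, add_zero]

theorem eG_compl_le_of_components [Fintype V] (hsym : ∀ x y, m x y = m y x) {A : Finset V}
    {k : ℝ} (hA : ∀ v ∈ A, (eG m (component m A v) (univ \ component m A v) : ℝ) ≤
      k * volOn m univ (component m A v)) :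
    (eG m A (univ \ A) : ℝ) ≤ k * volOn m univ A := by
  rw [eG_eq_sum_components hsym, volOn, eG_eq_sum_components hsym]
  push_cast
  rw [mul_sum]
  refine sum_le_sum fun c hc => ?_
  obtain ⟨v, hv, rfl⟩ := mem_image.1 hc
  calc (eG m (component m A v) (univ \ A) : ℝ)
      ≤ eG m (component m A v) (univ \ component m A v) := by
        exact_mod_cast eG_mono subset_rfl (sdiff_subset_sdiff subset_rfl component_subset)
    _ ≤ _ := hA v hv

end Partition

section Isolated

variable {V : Type*} [DecidableEq V] {m : V → V → ℕ}

theorem BadSet.mono_kappa {κ κ' : ℝ} {A X : Finset V} (h : BadSet m κ A X) (hκ : κ ≤ κ') :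
    BadSet m κ' A X :=
  ⟨h.1, h.2.1, h.2.2.1, h.2.2.2.1,
    h.2.2.2.2.trans_le (mul_le_mul_of_nonneg_right hκ (Nat.cast_nonneg _))⟩

variable [Fintype V]

theorem mem_isol_of_badSet {κ : ℝ} {X : Finset V} {x : V} (hX : BadSet m κ univ X)
    (hx : x ∈ X) : x ∈ Isol m κ :=
  mem_filter.2 ⟨mem_univ x, X, hX, hx⟩

theorem isol_mono {κ κ' : ℝ} (hκ : κ ≤ κ') : Isol m κ ⊆ Isol m κ' := fun x hx => by
  obtain ⟨-, X, hX, hxX⟩ := mem_filter.1 hx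
  exact mem_isol_of_badSet (hX.mono_kappa hκ) hxX

-- A component of `Y` containing a non-isolated vertex is not bad, and has all its outgoing edges
-- leaving `Y`.
theorem mul_volOn_sdiff_isol_le (hsym : ∀ x y, m x y = m y x) {κ : ℝ} (hκ : 0 ≤ κ)
    {Y : Finset V} (hY : 2 * (volOn m univ Y : ℝ) ≤ volOn m univ univ) :
    κ * volOn m univ (Y \ Isol m κ) ≤ eG m Y (univ \ Y) := by
  set F := (Y \ Isol m κ).image (component m Y)
  have hF : F ⊆ components m Y := image_subset_image sdiff_subset
  have hgood : ∀ c ∈ F, κ * volOn m univ c ≤ eG m c (univ \ Y) := by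
    intro c hc
    obtain ⟨x, hx, rfl⟩ := mem_image.1 hc
    obtain ⟨hxY, hxI⟩ := mem_sdiff.1 hx
    rw [← eG_component_compl]
    by_contra hcut
    refine hxI (mem_isol_of_badSet ⟨subset_univ _, ⟨x, self_mem_component hxY⟩,
      connOn_component hsym, le_trans ?_ hY, not_le.1 hcut⟩ (self_mem_component hxY))
    gcongr
    exact eG_mono component_subset subset_rfl
  calc κ * (volOn m univ (Y \ Isol m κ) : ℝ) ≤ κ * volOn m univ (F.biUnion id) := by
        gcongr
        refine eG_mono (fun x hx => mem_biUnion.2 ⟨_, mem_image_of_mem _ hx, ?_⟩) subset_rfl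
        exact self_mem_component (mem_sdiff.1 hx).1
    _ = ∑ c ∈ F, κ * volOn m univ c := by
        rw [volOn, eG_biUnion ((pairwiseDisjoint_components hsym Y).subset (by simpa using hF)),
          Nat.cast_sum, mul_sum]
        rfl
    _ ≤ ∑ c ∈ F, (eG m c (univ \ Y) : ℝ) := sum_le_sum hgood
    _ ≤ ∑ c ∈ components m Y, (eG m c (univ \ Y) : ℝ) :=
        sum_le_sum_of_subset_of_nonneg hF fun _ _ _ => Nat.cast_nonneg _
    _ = eG m Y (univ \ Y) := by rw [eG_eq_sum_components hsym, Nat.cast_sum]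

end Isolated

section Attached

variable {V : Type*} [DecidableEq V] {m : V → V → ℕ} (hsym : ∀ x y, m x y = m y x)
  {W S : Finset V} {v x y : V}
include hsym

noncomputable def attached (m : V → V → ℕ) (W S : Finset V) : Finset V :=
  W.filter fun w => 0 < eG m (component m W w) S

omit hsym in
theorem attached_subset : attached m W S ⊆ W :=
  filter_subset _ _

omit hsym in
theorem mem_attached : v ∈ attached m W S ↔ v ∈ W ∧ 0 < eG m (component m W v) S :=
  mem_filter

theorem component_subset_attached (hv : v ∈ attached m W S) :
    component m W v ⊆ attached m W S := fun _ hx =>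
  mem_attached.2 ⟨component_subset hx,
    component_eq_of_mem hsym hx ▸ (mem_attached.1 hv).2⟩

theorem eq_zero_of_mem_union_attached (hx : x ∈ S ∪ attached m W S)
    (hy : y ∈ W \ attached m W S) : m x y = 0 := by
  obtain ⟨hyW, hyA⟩ := mem_sdiff.1 hy
  by_contra hne
  rcases mem_union.1 hx with hxS | hxA
  · refine hyA (mem_attached.2 ⟨hyW, ?_⟩)
    calc 0 < m y x := hsym x y ▸ Nat.pos_of_ne_zero hne
      _ ≤ _ := le_eG (self_mem_component hyW) hxS
  · refine hyA (component_subset_attached hsym hxA (mem_component.2 ⟨hyW, .single ?_⟩))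
    exact ⟨attached_subset hxA, hyW, Nat.pos_of_ne_zero hne⟩

theorem component_attached (hv : v ∈ attached m W S) :
    component m (attached m W S) v = component m W v :=
  component_eq_of_connOn (self_mem_component (attached_subset hv))
    (component_subset_attached hsym hv) (connOn_component hsym) fun _ hx _ hy =>
      eq_zero_of_mem_component hx (attached_subset (mem_sdiff.1 hy).1) (mem_sdiff.1 hy).2

-- Every vertex of `attached m W S` reaches `S` through its component in `W`.
theorem connOn_union_attached (hS : ConnOn m S) : ConnOn m (S ∪ attached m W S) := by
  have hreach : ∀ z ∈ S ∪ attached m W S, ∃ s ∈ S,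
      Relation.ReflTransGen (AdjIn m (S ∪ attached m W S)) z s := by
    intro z hz
    rcases mem_union.1 hz with hzS | hzA
    · exact ⟨z, hzS, .refl⟩
    obtain ⟨hzW, hpos⟩ := mem_attached.1 hzA
    obtain ⟨p, hp, q, hq, hpq⟩ : ∃ p ∈ component m W z, ∃ q ∈ S, 0 < m p q := by
      by_contra! h
      exact hpos.ne' (eG_eq_zero_iff.2 fun p hp q hq => Nat.le_zero.1 (h p hp q hq))
    have hsub : component m W z ⊆ S ∪ attached m W S :=
      (component_subset_attached hsym hzA).trans subset_union_right
    refine ⟨q, hq, .tail ?_ ⟨hsub hp, subset_union_left hq, hpq⟩⟩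
    exact reflTransGen_adjIn_mono hsub (connOn_component hsym z (self_mem_component hzW) p hp)
  intro x hx y hy
  obtain ⟨sx, hsx, hx⟩ := hreach x hx
  obtain ⟨sy, hsy, hy⟩ := hreach y hy
  exact (hx.trans (reflTransGen_adjIn_mono subset_union_left (hS sx hsx sy hsy))).trans
    (reflTransGen_adjIn_symm hsym hy)

theorem component_union_of_mem_union_attached (hS : ConnOn m S)
    (hv : v ∈ S ∪ attached m W S) : component m (W ∪ S) v = S ∪ attached m W S := by
  refine component_eq_of_connOn hv (union_subset subset_union_right
    (attached_subset.trans subset_union_left)) (connOn_union_attached hsym hS) fun _ hx _ hy => ?_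
  refine eq_zero_of_mem_union_attached hsym hx (mem_sdiff.2 ⟨?_, ?_⟩) <;>
    simp only [mem_sdiff, mem_union, not_or] at hy <;> tauto

theorem component_union_of_not_mem_attached (hv : v ∈ W) (hvA : v ∉ attached m W S) :
    component m (W ∪ S) v = component m W v := by
  refine component_eq_of_connOn (self_mem_component hv) (component_subset.trans
    subset_union_left) (connOn_component hsym) fun x hx y hy => ?_
  obtain ⟨hyWS, hyc⟩ := mem_sdiff.1 hy
  rcases mem_union.1 hyWS with hyW | hyS
  · exact eq_zero_of_mem_component hx hyW hyc
  have hxA : x ∉ attached m W S := fun hxA =>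
    hvA (component_subset_attached hsym hxA (component_eq_of_mem hsym hx ▸ self_mem_component hv))
  rw [hsym]
  exact eq_zero_of_mem_union_attached hsym (mem_union_left _ hyS)
    (mem_sdiff.2 ⟨component_subset hx, hxA⟩)

end Attached

section Step

variable {V : Type*} [Fintype V] [DecidableEq V] {m : V → V → ℕ}
  (hsym : ∀ x y, m x y = m y x) {W S : Finset V} {k ε κ : ℝ}
include hsym

theorem eG_le_volOn (X A : Finset V) : eG m X A ≤ volOn m univ A :=
  (eG_mono (subset_univ X) subset_rfl).trans (eG_comm hsym _ _).le

theorem volOn_union_attached (hSW : Disjoint S W) :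
    volOn m univ (S ∪ attached m W S) =
      volOn m (univ \ W) S + eG m S (attached m W S) + volOn m univ (attached m W S) := by
  have hAW : attached m W S ⊆ W := attached_subset
  have hSWA : eG m S (W \ attached m W S) = 0 := eG_eq_zero_iff.2 fun x hx y hy =>
    eq_zero_of_mem_union_attached hsym (mem_union_left _ hx) hy
  have hsplit : (univ : Finset V) = (univ \ W) ∪ ((W \ attached m W S) ∪ attached m W S) := by
    rw [sdiff_union_of_subset hAW, sdiff_union_of_subset (subset_univ W)]
  rw [volOn, volOn, volOn, eG_union_left _ (hSW.mono_right hAW), hsplit,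
    eG_union_right _ (disjoint_sdiff_self_left.mono_right (union_subset sdiff_subset hAW)),
    eG_union_right _ disjoint_sdiff_self_left, hSWA, ← hsplit, zero_add]

theorem eG_union_attached_compl (hSW : Disjoint S W) :
    eG m (S ∪ attached m W S) (univ \ (S ∪ attached m W S)) + eG m S (attached m W S) =
      eG m S ((univ \ W) \ S) + eG m (attached m W S) (univ \ attached m W S) := by
  set A := attached m W S
  have hAW : A ⊆ W := attached_subset
  have hSA : Disjoint S A := hSW.mono_right hAW
  have hSWA : eG m S (W \ A) = 0 := eG_eq_zero_iff.2 fun x hx y hy =>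
    eq_zero_of_mem_union_attached hsym (mem_union_left _ hx) hy
  have hsplitC : univ \ (S ∪ A) = ((univ \ W) \ S) ∪ (W \ A) := by
    ext x
    have : x ∈ S → x ∉ W := fun h => disjoint_left.1 hSW h
    simp only [mem_sdiff, mem_union, mem_univ, true_and]
    tauto
  have hsplitA : univ \ A = S ∪ (univ \ (S ∪ A)) := by
    ext x
    have : x ∈ S → x ∉ A := fun h => disjoint_left.1 hSA h
    simp only [mem_sdiff, mem_union, mem_univ, true_and]
    tauto
  have hdisjC : Disjoint ((univ \ W) \ S) (W \ A) :=
    (disjoint_sdiff_self_left.mono_left sdiff_subset).mono_right sdiff_subset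
  rw [eG_union_left _ hSA, hsplitC, eG_union_right _ hdisjC, hSWA, ← hsplitC, hsplitA,
    eG_union_right _ (disjoint_sdiff_self_right.mono_right
      (sdiff_subset_sdiff subset_rfl subset_union_left)), eG_comm hsym A S]
  omega

omit hsym in
theorem volOn_compl_add_le (hSW : Disjoint S W) {A : Finset V} (hAW : A ⊆ W) :
    volOn m (univ \ W) (univ \ W) + eG m S A + volOn m univ A ≤ volOn m univ univ := by
  have hsplit : (univ : Finset V) = (univ \ W) ∪ W := (sdiff_union_of_subset (subset_univ W)).symm
  have hSH : S ⊆ univ \ W := fun x hx => mem_sdiff.2 ⟨mem_univ x, disjoint_left.1 hSW hx⟩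
  have htotal : volOn m univ univ =
      volOn m (univ \ W) (univ \ W) + eG m (univ \ W) W + volOn m univ W := by
    conv_lhs => rw [volOn, hsplit, eG_union_left _ disjoint_sdiff_self_left,
      eG_union_right _ disjoint_sdiff_self_left]
    rw [← hsplit]
    rfl
  have := eG_mono (m := m) hSH hAW
  have := eG_mono (m := m) hAW (subset_refl univ)
  simp only [volOn] at *
  omega

theorem eG_union_attached_compl_add_lt (hW : ∀ v ∈ W, BadSet m k univ (component m W v))
    (hS : BadSet m k (univ \ W) S) :
    (eG m (S ∪ attached m W S) (univ \ (S ∪ attached m W S)) : ℝ) + eG m S (attached m W S) <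
      k * (volOn m (univ \ W) S + volOn m univ (attached m W S)) := by
  have hAcut : (eG m (attached m W S) (univ \ attached m W S) : ℝ) ≤
      k * volOn m univ (attached m W S) :=
    eG_compl_le_of_components hsym fun v hv => by
      rw [component_attached hsym hv]
      exact (hW v (attached_subset hv)).2.2.2.2.le
  have hcut := eG_union_attached_compl hsym (subset_sdiff.1 hS.1).2
  have hScut := hS.2.2.2.2
  rw [← Nat.cast_add, hcut, Nat.cast_add]
  linarith

theorem two_mul_volOn_union_attached_le (hε0 : 0 ≤ ε) (hε1 : ε ≤ 1) (hκ : 0 < κ)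
    (hiso : 2 * (volOn m univ (Isol m κ) : ℝ) ≤ ε * volOn m univ univ)
    (hW : ∀ v ∈ W, BadSet m ((1 - ε) * κ) univ (component m W v))
    (hS : BadSet m ((1 - ε) * κ) (univ \ W) S) :
    2 * (volOn m univ (S ∪ attached m W S) : ℝ) ≤ volOn m univ univ := by
  have hcut := eG_union_attached_compl_add_lt hsym hW hS
  set A := attached m W S
  set C := S ∪ A
  set Y := univ \ C
  have hSW : Disjoint S W := (subset_sdiff.1 hS.1).2
  have hAI : A ⊆ Isol m κ := fun v hv =>
    isol_mono (by nlinarith) (mem_isol_of_badSet (hW v (attached_subset hv))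
      (self_mem_component (attached_subset hv)))
  have hvolC : (volOn m univ C : ℝ) = volOn m (univ \ W) S + eG m S A + volOn m univ A := by
    exact_mod_cast volOn_union_attached hsym hSW
  have htotal : (volOn m (univ \ W) (univ \ W) + eG m S A + volOn m univ A : ℝ) ≤
      volOn m univ univ := by
    exact_mod_cast volOn_compl_add_le hSW attached_subset
  have he1 : (eG m S A : ℝ) ≤ volOn m univ A := by exact_mod_cast eG_le_volOn hsym S A
  have hShalf := hS.2.2.2.1
  have hCY : (volOn m univ Y + volOn m univ C : ℝ) = volOn m univ univ := by
    exact_mod_cast eG_sdiff_add (subset_univ C) univ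
  have hYsplit : (volOn m univ (Y ∩ Isol m κ) + volOn m univ (Y \ Isol m κ) : ℝ) =
      volOn m univ Y := by
    exact_mod_cast eG_inter_add_sdiff Y (Isol m κ) univ
  have hIA :
      (volOn m univ (Y ∩ Isol m κ) + volOn m univ A : ℝ) ≤ volOn m univ (Isol m κ) := by
    rw [← Nat.cast_add, volOn, volOn, ← eG_union_left _ ((disjoint_sdiff_self_left.mono_left
      inter_subset_left).mono_right subset_union_right)]
    exact_mod_cast eG_mono (union_subset inter_subset_right hAI) subset_rfl
  -- With `s = vol_{G \ W}(S)`, `e = e(S, A)`, `a = vol(A)` and `D = vol(Y \ Isol κ)`: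
  -- `vol G ≤ s + e + D + ε vol G / 2` and `κ D + e < (1 - ε) κ (s + a)`, against
  -- `2 s + e + a ≤ vol G` and `e ≤ a`.
  by_contra! hbig
  have hD := mul_volOn_sdiff_isol_le hsym hκ.le (Y := Y) (by linarith)
  rw [Finset.sdiff_sdiff_eq_self (subset_univ C), eG_comm hsym] at hD
  have hD' : (volOn m univ (Y \ Isol m κ) : ℝ) <
      (1 - ε) * (volOn m (univ \ W) S + volOn m univ A) := by
    by_contra! h
    nlinarith [mul_le_mul_of_nonneg_left h hκ.le]
  nlinarith [mul_le_mul_of_nonneg_left hShalf (by linarith : (0 : ℝ) ≤ 2 - ε),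
    mul_le_mul_of_nonneg_left he1 hε0]

theorem badSet_union_attached (hε0 : 0 ≤ ε) (hε1 : ε ≤ 1) (hκ : 0 < κ)
    (hiso : 2 * (volOn m univ (Isol m κ) : ℝ) ≤ ε * volOn m univ univ)
    (hW : ∀ v ∈ W, BadSet m ((1 - ε) * κ) univ (component m W v))
    (hS : BadSet m ((1 - ε) * κ) (univ \ W) S) :
    BadSet m ((1 - ε) * κ) univ (S ∪ attached m W S) := by
  have hcut := eG_union_attached_compl_add_lt hsym hW hS
  have hvolC : (volOn m univ (S ∪ attached m W S) : ℝ) =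
      volOn m (univ \ W) S + eG m S (attached m W S) + volOn m univ (attached m W S) := by
    exact_mod_cast volOn_union_attached hsym (subset_sdiff.1 hS.1).2
  have hkε : 0 ≤ (1 - ε) * κ := mul_nonneg (by linarith) hκ.le
  refine ⟨subset_univ _, hS.2.1.mono subset_union_left, connOn_union_attached hsym hS.2.2.1,
    two_mul_volOn_union_attached_le hsym hε0 hε1 hκ hiso hW hS, ?_⟩
  rw [hvolC]
  nlinarith [mul_nonneg hkε (Nat.cast_nonneg (α := ℝ) (eG m S (attached m W S)))]

theorem badSet_component_union (hε0 : 0 ≤ ε) (hε1 : ε ≤ 1) (hκ : 0 < κ)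
    (hiso : 2 * (volOn m univ (Isol m κ) : ℝ) ≤ ε * volOn m univ univ)
    (hW : ∀ v ∈ W, BadSet m ((1 - ε) * κ) univ (component m W v))
    (hS : BadSet m ((1 - ε) * κ) (univ \ W) S) :
    ∀ v ∈ W ∪ S, BadSet m ((1 - ε) * κ) univ (component m (W ∪ S) v) := by
  intro v hv
  by_cases hvC : v ∈ S ∪ attached m W S
  · rw [component_union_of_mem_union_attached hsym hS.2.2.1 hvC]
    exact badSet_union_attached hsym hε0 hε1 hκ hiso hW hS
  · have hvW : v ∈ W := (mem_union.1 hv).resolve_right fun h => hvC (mem_union_left _ h)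
    rw [component_union_of_not_mem_attached hsym hvW fun h => hvC (mem_union_right _ h)]
    exact hW v hvW

end Step

/-- run the removal process `G₀ = G`, `Gᵢ = Gᵢ₋₁ \ Sᵢ` where each `Sᵢ`
is a `κ_ε`-bad set of `Gᵢ₋₁` (with `κ_ε = (1-ε)κ`).  If the `κ`-isolated vertices of
`G` have volume at most `εn`, then every removed vertex is `κ_ε`-isolated in `G`:
`⋃ᵢ Sᵢ ⊆ Isol_{κ_ε}(G) ⊆ Isol_κ(G)`. -/
theorem stmt3 {V : Type*} [Fintype V] [DecidableEq V]
    (m : V → V → ℕ) (hsym : ∀ x y, m x y = m y x)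
    (n : ℕ) (h2n : eG m Finset.univ Finset.univ = 2 * n)
    (ε κ : ℝ) (hε0 : 0 < ε) (hε : ε < 1 / 2) (hκ : 0 < κ)
    (hiso : (volOn m Finset.univ (Isol m κ) : ℝ) ≤ ε * n)
    (τ : ℕ) (S Gs : ℕ → Finset V)
    (hG : ∀ i, Gs i = Finset.univ \ (Finset.range i).biUnion (fun j => S (j + 1)))
    (hbad : ∀ i < τ, BadSet m ((1 - ε) * κ) (Gs i) (S (i + 1))) :
    (∀ i < τ, S (i + 1) ⊆ Isol m ((1 - ε) * κ)) ∧
      Isol m ((1 - ε) * κ) ⊆ Isol m κ := by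
  have hiso' : 2 * (volOn m univ (Isol m κ) : ℝ) ≤ ε * volOn m univ univ := by
    rw [show volOn m univ univ = 2 * n from h2n]
    push_cast
    linarith
  have hinv : ∀ i ≤ τ, ∀ v ∈ (range i).biUnion (fun j => S (j + 1)),
      BadSet m ((1 - ε) * κ) univ (component m ((range i).biUnion fun j => S (j + 1)) v) := by
    intro i
    induction i with
    | zero => simp
    | succ i ih =>
      intro hi
      rw [range_add_one, biUnion_insert, union_comm]
      exact badSet_component_union hsym hε0.le (by linarith) hκ hiso' (ih (by omega))
        (hG i ▸ hbad i (by omega))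
  refine ⟨fun i hi v hv => ?_, isol_mono (by nlinarith)⟩
  have hvW : v ∈ (range (i + 1)).biUnion fun j => S (j + 1) :=
    mem_biUnion.2 ⟨i, self_mem_range_succ i, hv⟩
  exact mem_isol_of_badSet (hinv (i + 1) hi v hvW) (self_mem_component hvW)
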